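/- arXiv:1604.07735 — 2 statements merged into one kernel-verified Lean document; each statement's English description precedes it below -/
import Mathlib

section
/- Let C₀, C₁, ⟨φ₀⟩, ⟨φ₁⟩ be positive constants with C₀·C₁·⟨φ₀⟩·⟨φ₁⟩ < 1. Suppose ε₀, ε₁ ∈ L^∞(ℝ^d) satisfy ε₀ = C₀(exp(−(φ₀ ∗ ε₁)) − 1) and ε₁ = C₁(exp(−(φ₁ ∗ ε₀)) − 1) pointwise, where φ₀, φ₁ : ℝ^d → [0,∞) are integrable with ∫φ_i = ⟨φ_i⟩. Then if ‖ε₀‖_∞ and ‖ε₁‖_∞ are smaller than a suitable δ > 0 (depending on the constants), necessarily ε₀ = 0 and ε₁ = 0 almost everywhere. -/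
/-!
Write `Nᵢ` for the essential supremum of `|εᵢ|`. Since `|φ ∗ ε| ≤ ⟨φ⟩ ‖ε‖_∞` and
`|e^{-a} - 1| ≤ |a| e^{|a|}`, the fixed-point equations give
`N₀ ≤ C₀ ⟨φ₀⟩ e^{⟨φ₀⟩ δ} N₁` and `N₁ ≤ C₁ ⟨φ₁⟩ e^{⟨φ₁⟩ δ} N₀`. The product of the two factors is
`C₀ C₁ ⟨φ₀⟩ ⟨φ₁⟩ e^{(⟨φ₀⟩ + ⟨φ₁⟩) δ}`, which is `< 1` for small `δ`, so `N₀ = N₁ = 0`.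
-/

open MeasureTheory Real Filter Topology
open scoped ENNReal

theorem Real.abs_exp_sub_one_le_of_abs_le {t r : ℝ} (h : |t| ≤ r) : |exp t - 1| ≤ r * exp r := by
  have hle : |exp t - 1| ≤ |t| * exp |t| := by
    rcases le_total 0 t with ht | ht
    · have hexp : 1 - exp (-t) ≤ t := by linarith [add_one_le_exp (-t)]
      rw [abs_of_nonneg ht, abs_of_nonneg (by linarith [add_one_le_exp t])]
      calc exp t - 1 = (1 - exp (-t)) * exp t := by rw [sub_mul, ← exp_add]; simp
        _ ≤ t * exp t := by gcongr
    · rw [abs_of_nonpos ht, abs_of_nonpos (by linarith [exp_le_one_iff.2 ht])]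
      nlinarith [add_one_le_exp t, one_le_exp (neg_nonneg.2 ht)]
  have hr : 0 ≤ r := (abs_nonneg t).trans h
  exact hle.trans (by gcongr)

theorem exists_pos_mul_exp_mul_lt_one {K : ℝ} (hK : K < 1) (c : ℝ) :
    ∃ δ > 0, K * exp (c * δ) < 1 := by
  have hcont : Continuous fun δ ↦ K * exp (c * δ) := by fun_prop
  have hlt : ∀ᶠ δ in 𝓝 0, K * exp (c * δ) < 1 :=
    hcont.continuousAt.eventually_lt continuousAt_const (by simpa using hK)
  exact hlt.exists_gt

theorem eq_zero_and_eq_zero_of_le_mul_of_le_mul {N₀ N₁ a b : ℝ} (h₀ : 0 ≤ N₀) (h₁ : 0 ≤ N₁)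
    (hN₀ : N₀ ≤ a * N₁) (hN₁ : N₁ ≤ b * N₀) (hab : a * b < 1) : N₀ = 0 ∧ N₁ = 0 := by
  have hN₀_zero : N₀ = 0 := by
    rcases lt_or_ge a 0 with ha | ha
    · nlinarith
    · nlinarith [mul_le_mul_of_nonneg_left hN₁ ha]
  exact ⟨hN₀_zero, le_antisymm (hN₁.trans_eq (by rw [hN₀_zero, mul_zero])) h₁⟩

namespace MeasureTheory

section

variable {α E : Type*} [MeasurableSpace α] [NormedAddCommGroup E] {μ : Measure α} {f : α → E}

theorem lpNorm_exponent_top_le_of_ae_bound {B : ℝ} (hB : 0 ≤ B) (h : ∀ᵐ x ∂μ, ‖f x‖ ≤ B) :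
    lpNorm f ∞ μ ≤ B := by
  unfold lpNorm
  split_ifs
  · rw [eLpNorm_exponent_top]
    exact ENNReal.toReal_le_of_le_ofReal hB (eLpNormEssSup_le_of_ae_bound h)
  · exact hB

theorem lpNorm_lt_of_eLpNorm_lt {p : ℝ≥0∞} {δ : ℝ} (hf : AEStronglyMeasurable f μ)
    (h : eLpNorm f p μ < ENNReal.ofReal δ) : lpNorm f p μ < δ :=
  toReal_eLpNorm hf ▸ ENNReal.toReal_lt_of_lt_ofReal h

end

section

variable {G : Type*} [MeasurableSpace G] [AddGroup G] [MeasurableAdd G] [MeasurableNeg G]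
  {μ : Measure G} [μ.IsAddLeftInvariant] [μ.IsNegInvariant] {φ : G → ℝ}

theorem norm_integral_sub_mul_le_of_ae_norm_le (hφ : Integrable φ μ) (hφ_nonneg : ∀ x, 0 ≤ φ x)
    {η : G → ℝ} {N : ℝ} (hη : ∀ᵐ y ∂μ, ‖η y‖ ≤ N) (x : G) :
    ‖∫ y, φ (x - y) * η y ∂μ‖ ≤ (∫ y, φ y ∂μ) * N :=
  calc ‖∫ y, φ (x - y) * η y ∂μ‖ ≤ ∫ y, φ (x - y) * N ∂μ := by
        refine norm_integral_le_of_norm_le ((hφ.comp_sub_left x).mul_const N) ?_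
        filter_upwards [hη] with y hy
        rw [norm_mul, norm_of_nonneg (hφ_nonneg _)]
        exact mul_le_mul_of_nonneg_left hy (hφ_nonneg _)
    _ = (∫ y, φ y ∂μ) * N := by rw [integral_mul_const, integral_sub_left_eq_self]

theorem lpNorm_exponent_top_le_of_eq_mul_exp_neg_integral_sub_one {C δ : ℝ} (hC : 0 ≤ C)
    (hφ : Integrable φ μ) (hφ_nonneg : ∀ x, 0 ≤ φ x) {ε η : G → ℝ} (hη : MemLp η ∞ μ)
    (hηδ : lpNorm η ∞ μ ≤ δ) (heq : ∀ x, ε x = C * (exp (-∫ y, φ (x - y) * η y ∂μ) - 1)) :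
    lpNorm ε ∞ μ ≤ C * (∫ y, φ y ∂μ) * exp ((∫ y, φ y ∂μ) * δ) * lpNorm η ∞ μ := by
  set c := ∫ y, φ y ∂μ
  set N := lpNorm η ∞ μ
  have hc : 0 ≤ c := integral_nonneg hφ_nonneg
  have hN : 0 ≤ N := lpNorm_nonneg
  refine lpNorm_exponent_top_le_of_ae_bound (by positivity) (ae_of_all _ fun x ↦ ?_)
  have hconv := norm_integral_sub_mul_le_of_ae_norm_le hφ hφ_nonneg (ae_le_lpNorm_exponent_top hη) x
  calc ‖ε x‖ = C * |exp (-∫ y, φ (x - y) * η y ∂μ) - 1| := by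
        rw [heq, norm_eq_abs, abs_mul, abs_of_nonneg hC]
    _ ≤ C * (c * N * exp (c * N)) := by
        gcongr
        exact abs_exp_sub_one_le_of_abs_le (by rwa [abs_neg, ← norm_eq_abs])
    _ ≤ C * (c * N * exp (c * δ)) := by gcongr
    _ = C * c * exp (c * δ) * N := by ring

end

end MeasureTheory

theorem stationary_perturbation_trivial_general {d : ℕ}
    (C₀ C₁ c₀ c₁ : ℝ) (hC₀ : 0 < C₀) (hC₁ : 0 < C₁)
    (hsmall : C₀ * C₁ * c₀ * c₁ < 1)
    (φ₀ φ₁ : EuclideanSpace ℝ (Fin d) → ℝ)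
    (hφ₀int : Integrable φ₀) (hφ₁int : Integrable φ₁)
    (hφ₀pos : ∀ x, 0 ≤ φ₀ x) (hφ₁pos : ∀ x, 0 ≤ φ₁ x)
    (hφ₀norm : ∫ x, φ₀ x = c₀) (hφ₁norm : ∫ x, φ₁ x = c₁) :
    ∃ δ : ℝ, 0 < δ ∧
      ∀ ε₀ ε₁ : EuclideanSpace ℝ (Fin d) → ℝ,
        Measurable ε₀ → Measurable ε₁ →
        eLpNorm ε₀ ⊤ volume < ENNReal.ofReal δ →
        eLpNorm ε₁ ⊤ volume < ENNReal.ofReal δ →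
        (∀ x, ε₀ x = C₀ * (Real.exp (-(∫ y, φ₀ (x - y) * ε₁ y)) - 1)) →
        (∀ x, ε₁ x = C₁ * (Real.exp (-(∫ y, φ₁ (x - y) * ε₀ y)) - 1)) →
        (∀ᵐ x, ε₀ x = 0) ∧ (∀ᵐ x, ε₁ x = 0) := by
  obtain ⟨δ, hδ, hcontr⟩ := exists_pos_mul_exp_mul_lt_one hsmall (c₀ + c₁)
  refine ⟨δ, hδ, fun ε₀ ε₁ hm₀ hm₁ h₀ h₁ heq₀ heq₁ ↦ ?_⟩
  have hε₀ : MemLp ε₀ ⊤ volume := ⟨hm₀.aestronglyMeasurable, h₀.trans ENNReal.ofReal_lt_top⟩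
  have hε₁ : MemLp ε₁ ⊤ volume := ⟨hm₁.aestronglyMeasurable, h₁.trans ENNReal.ofReal_lt_top⟩
  have hN₀ := lpNorm_exponent_top_le_of_eq_mul_exp_neg_integral_sub_one hC₀.le hφ₀int hφ₀pos hε₁
    (lpNorm_lt_of_eLpNorm_lt hm₁.aestronglyMeasurable h₁).le heq₀
  have hN₁ := lpNorm_exponent_top_le_of_eq_mul_exp_neg_integral_sub_one hC₁.le hφ₁int hφ₁pos hε₀
    (lpNorm_lt_of_eLpNorm_lt hm₀.aestronglyMeasurable h₀).le heq₁
  rw [hφ₀norm] at hN₀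
  rw [hφ₁norm] at hN₁
  have hprod : C₀ * c₀ * exp (c₀ * δ) * (C₁ * c₁ * exp (c₁ * δ)) < 1 :=
    calc _ = C₀ * C₁ * c₀ * c₁ * exp ((c₀ + c₁) * δ) := by rw [add_mul, exp_add]; ring
      _ < 1 := hcontr
  obtain ⟨hz₀, hz₁⟩ :=
    eq_zero_and_eq_zero_of_le_mul_of_le_mul lpNorm_nonneg lpNorm_nonneg hN₀ hN₁ hprod
  exact ⟨(lpNorm_eq_zero hε₀ ENNReal.top_ne_zero).1 hz₀,
    (lpNorm_eq_zero hε₁ ENNReal.top_ne_zero).1 hz₁⟩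

theorem stationary_perturbation_trivial {d : ℕ}
    (C₀ C₁ c₀ c₁ : ℝ) (hC₀ : 0 < C₀) (hC₁ : 0 < C₁) (hc₀ : 0 < c₀) (hc₁ : 0 < c₁)
    (hsmall : C₀ * C₁ * c₀ * c₁ < 1)
    (φ₀ φ₁ : EuclideanSpace ℝ (Fin d) → ℝ)
    (hφ₀int : Integrable φ₀) (hφ₁int : Integrable φ₁)
    (hφ₀pos : ∀ x, 0 ≤ φ₀ x) (hφ₁pos : ∀ x, 0 ≤ φ₁ x)
    (hφ₀norm : ∫ x, φ₀ x = c₀) (hφ₁norm : ∫ x, φ₁ x = c₁) :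
    ∃ δ : ℝ, 0 < δ ∧
      ∀ ε₀ ε₁ : EuclideanSpace ℝ (Fin d) → ℝ,
        Measurable ε₀ → Measurable ε₁ →
        eLpNorm ε₀ ⊤ volume < ENNReal.ofReal δ →
        eLpNorm ε₁ ⊤ volume < ENNReal.ofReal δ →
        (∀ x, ε₀ x = C₀ * (Real.exp (-(∫ y, φ₀ (x - y) * ε₁ y)) - 1)) →
        (∀ x, ε₁ x = C₁ * (Real.exp (-(∫ y, φ₁ (x - y) * ε₀ y)) - 1)) →
        (∀ᵐ x, ε₀ x = 0) ∧ (∀ᵐ x, ε₁ x = 0) :=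
  stationary_perturbation_trivial_general C₀ C₁ c₀ c₁ hC₀ hC₁ hsmall φ₀ φ₁ hφ₀int hφ₁int hφ₀pos
    hφ₁pos hφ₀norm hφ₁norm
end

section
/- Let α > 0 and C > 0, and choose T > 0 with exp(3αT) < 1 + 3/(2C). Define F on continuous maps ρ : [0,T] → L^∞(ℝ^d) by F(ρ)_t = e^{−αt}ρ_0 + ∫₀ᵗ e^{−α(t−s)} h(ρ_s) ds where h : L^∞ → L^∞ satisfies ‖h(u) − h(v)‖_∞ ≤ 2α‖u−v‖_∞ + 2α·max(‖u‖_∞,‖v‖_∞)·‖u−v‖_∞ and ‖h(u)‖_∞ ≤ 2α‖u‖_∞. Then F maps the set Δ_C = {ρ : sup_t e^{−αt}‖ρ_t‖_∞ ≤ C, ρ|_{t=0} = ρ_0} into itself and is a strict contraction on Δ_C with respect to the norm ‖ρ‖_T = sup_{t∈[0,T]} e^{−αt}‖ρ_t‖_∞; consequently F has a unique fixed point in Δ_C. -/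
/-!
Rescaling `η_t = e^{-αt} ρ_t` turns the weighted norm `sup_{t ≤ T} e^{-αt} ‖ρ_t‖` into the sup
norm on `C([0,T], E)`, where `Δ_C` becomes a closed set, so Banach's fixed point theorem applies
once `F` maps `Δ_C` to itself and contracts there. On `Δ_C` we have `‖ρ_s‖ ≤ C e^{αs}`, and the
bounds on `h` reduce both estimates to `∫₀ᵗ e^{-α(t-s)} e^{βs} ds = (e^{βt} - e^{-αt}) / (α + β)`
with `β = α, 2α`. The first gives `e^{-αt} ‖F(ρ)_t‖ ≤ C`, the second the Lipschitz constant
`κ(t) = 1 - e^{-2αt} (1 - (2C/3)(e^{3αt} - 1))`, which increases with `t`; `κ(T) < 1` is exactly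
the condition `e^{3αT} < 1 + 3/(2C)`.
-/

open MeasureTheory Set Real

namespace MildSolution

lemma exp_neg_mul_le_iff {a x C : ℝ} : exp (-a) * x ≤ C ↔ x ≤ C * exp a := by
  rw [exp_neg, inv_mul_le_iff₀ (exp_pos a), mul_comm]

lemma integral_exp_mul_sub_mul_exp (α β t : ℝ) (hαβ : α + β ≠ 0) :
    ∫ s in (0 : ℝ)..t, exp (-α * (t - s)) * exp (β * s) =
      (exp (β * t) - exp (-α * t)) / (α + β) := by
  have hexp : ∀ s, exp (-α * (t - s)) * exp (β * s) = exp (-α * t + (α + β) * s) := fun s => by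
    rw [← exp_add]; ring_nf
  have hderiv : ∀ s ∈ uIcc 0 t, HasDerivAt (fun s => exp (-α * t + (α + β) * s) / (α + β))
      (exp (-α * t + (α + β) * s)) s := fun s _ => by
    simpa [hαβ] using
      (((hasDerivAt_id s).const_mul (α + β)).const_add (-α * t)).exp.div_const (α + β)
  simp_rw [hexp]
  rw [intervalIntegral.integral_eq_sub_of_hasDerivAt hderiv
    ((by fun_prop : Continuous fun s => exp (-α * t + (α + β) * s)).intervalIntegrable _ _)]
  ring_nf

lemma continuous_of_norm_sub_le {E F : Type*} [SeminormedAddCommGroup E]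
    [SeminormedAddCommGroup F] {h : E → F} {a b : ℝ}
    (hh : ∀ u v, ‖h u - h v‖ ≤ a * ‖u - v‖ + b * max ‖u‖ ‖v‖ * ‖u - v‖) : Continuous h := by
  refine continuous_iff_continuousAt.2 fun v => tendsto_iff_norm_sub_tendsto_zero.2 ?_
  have hbound : Continuous fun u => a * ‖u - v‖ + b * max ‖u‖ ‖v‖ * ‖u - v‖ := by fun_prop
  exact squeeze_zero (fun _ => norm_nonneg _) (fun u => hh u v) (hbound.tendsto' v 0 (by simp))

noncomputable def contractionConst (α C t : ℝ) : ℝ :=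
  1 - exp (-(2 * α * t)) + 2 * C / 3 * (exp (α * t) - exp (-(2 * α * t)))

section contractionConst

variable {α C : ℝ}

lemma contractionConst_mono (hα : 0 ≤ α) (hC : 0 ≤ C) : Monotone (contractionConst α C) := by
  intro s t hst
  unfold contractionConst
  gcongr

lemma contractionConst_nonneg (hα : 0 ≤ α) (hC : 0 ≤ C) {t : ℝ} (ht : 0 ≤ t) :
    0 ≤ contractionConst α C t := by
  simpa [contractionConst] using contractionConst_mono hα hC ht

lemma contractionConst_lt_one (hC : 0 < C) {t : ℝ} (ht : exp (3 * α * t) < 1 + 3 / (2 * C)) :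
    contractionConst α C t < 1 := by
  have hsplit : contractionConst α C t =
      1 - exp (-(2 * α * t)) * (1 - 2 * C / 3 * (exp (3 * α * t) - 1)) := by
    have hprod : exp (-(2 * α * t)) * exp (3 * α * t) = exp (α * t) := by
      rw [← exp_add]; ring_nf
    rw [contractionConst, ← hprod]
    ring
  have hsmall : 2 * C / 3 * (exp (3 * α * t) - 1) < 1 :=
    calc 2 * C / 3 * (exp (3 * α * t) - 1) < 2 * C / 3 * (3 / (2 * C)) := by gcongr; linarith
      _ = 1 := by field_simp
  rw [hsplit]
  have := mul_pos (exp_pos (-(2 * α * t))) (sub_pos.2 hsmall)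
  linarith

end contractionConst

variable {E : Type*} [NormedAddCommGroup E]

def deltaSet (α C T : ℝ) (ρ₀ : E) : Set (ℝ → E) :=
  {ρ | ContinuousOn ρ (Icc 0 T) ∧ ρ 0 = ρ₀ ∧ ∀ t ∈ Icc (0 : ℝ) T, exp (-α * t) * ‖ρ t‖ ≤ C}

def WeightedLipschitzOn (α T κ : ℝ) (S : Set (ℝ → E)) (G : (ℝ → E) → ℝ → E) : Prop :=
  ∀ ρ ∈ S, ∀ σ ∈ S, ∀ M, (∀ s ∈ Icc 0 T, exp (-α * s) * ‖ρ s - σ s‖ ≤ M) →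
    ∀ t ∈ Icc 0 T, exp (-α * t) * ‖G ρ t - G σ t‖ ≤ κ * M

section deltaSet

variable {α C T κ : ℝ} {ρ₀ : E} {ρ σ : ℝ → E}

lemma norm_le_of_mem_deltaSet {t : ℝ} (hρ : ρ ∈ deltaSet α C T ρ₀) (ht : t ∈ Icc 0 T) :
    ‖ρ t‖ ≤ C * exp (α * t) :=
  exp_neg_mul_le_iff.1 (by rw [← neg_mul]; exact hρ.2.2 t ht)

lemma norm_sub_le_of_mem_deltaSet {h : E → E} {t M : ℝ} (hα : 0 ≤ α)
    (hlip : ∀ u v, ‖h u - h v‖ ≤ 2 * α * ‖u - v‖ + 2 * α * max ‖u‖ ‖v‖ * ‖u - v‖)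
    (hρ : ρ ∈ deltaSet α C T ρ₀) (hσ : σ ∈ deltaSet α C T ρ₀)
    (hM : ∀ s ∈ Icc 0 T, exp (-α * s) * ‖ρ s - σ s‖ ≤ M) (ht : t ∈ Icc 0 T) :
    ‖h (ρ t) - h (σ t)‖ ≤ 2 * α * M * exp (α * t) + 2 * α * C * M * exp (2 * α * t) := by
  have hdist : ‖ρ t - σ t‖ ≤ M * exp (α * t) :=
    exp_neg_mul_le_iff.1 (by rw [← neg_mul]; exact hM t ht)
  have hmax : max ‖ρ t‖ ‖σ t‖ ≤ C * exp (α * t) :=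
    max_le (norm_le_of_mem_deltaSet hρ ht) (norm_le_of_mem_deltaSet hσ ht)
  have hCexp : 0 ≤ C * exp (α * t) := (norm_nonneg _).trans ((le_max_left _ _).trans hmax)
  calc ‖h (ρ t) - h (σ t)‖
      ≤ 2 * α * ‖ρ t - σ t‖ + 2 * α * max ‖ρ t‖ ‖σ t‖ * ‖ρ t - σ t‖ := hlip _ _
    _ ≤ 2 * α * (M * exp (α * t)) + 2 * α * (C * exp (α * t)) * (M * exp (α * t)) := by
        gcongr
    _ = 2 * α * M * exp (α * t) + 2 * α * C * M * exp (2 * α * t) := by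
        rw [show 2 * α * t = α * t + α * t by ring, exp_add]
        ring

noncomputable def weightedSup (α T : ℝ) (ρ : ℝ → E) : ℝ :=
  sSup ((fun s => exp (-α * s) * ‖ρ s‖) '' Icc 0 T)

lemma le_weightedSup (hρ : ContinuousOn ρ (Icc 0 T)) {s : ℝ} (hs : s ∈ Icc 0 T) :
    exp (-α * s) * ‖ρ s‖ ≤ weightedSup α T ρ :=
  le_csSup (isCompact_Icc.bddAbove_image (by fun_prop)) ⟨s, hs, rfl⟩

lemma WeightedLipschitzOn.eqOn {G : (ℝ → E) → ℝ → E}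
    (hG : WeightedLipschitzOn α T κ (deltaSet α C T ρ₀) G) (hκ : κ < 1)
    (hρ : ρ ∈ deltaSet α C T ρ₀) (hσ : σ ∈ deltaSet α C T ρ₀)
    (hρG : EqOn (G ρ) ρ (Icc 0 T)) (hσG : EqOn (G σ) σ (Icc 0 T)) : EqOn ρ σ (Icc 0 T) := by
  intro t ht
  have hT : 0 ≤ T := ht.1.trans ht.2
  have hcont : ContinuousOn (ρ - σ) (Icc 0 T) := hρ.1.sub hσ.1
  set W := weightedSup α T (ρ - σ)
  have hfix : ∀ s ∈ Icc 0 T, exp (-α * s) * ‖(ρ - σ) s‖ ≤ κ * W := fun s hs => by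
    simpa only [Pi.sub_apply, hρG hs, hσG hs] using
      hG ρ hρ σ hσ W (fun s hs => le_weightedSup hcont hs) s hs
  have hW : W ≤ κ * W := csSup_le ((nonempty_Icc.2 hT).image _) (forall_mem_image.2 hfix)
  have hW0 : 0 ≤ W :=
    (by positivity : 0 ≤ exp (-α * 0) * ‖(ρ - σ) 0‖).trans
      (le_weightedSup hcont (left_mem_Icc.2 hT))
  have hzero : exp (-α * t) * ‖ρ t - σ t‖ ≤ 0 :=
    (le_weightedSup hcont ht).trans (by nlinarith)
  exact sub_eq_zero.1 (norm_le_zero_iff.1 (nonpos_of_mul_nonpos_right hzero (exp_pos _)))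

end deltaSet

variable [NormedSpace ℝ E]

lemma norm_integral_exp_smul_le {α t : ℝ} (ht : 0 ≤ t) {f : ℝ → E} {g : ℝ → ℝ}
    (hg : Continuous g) (hfg : ∀ s ∈ Icc 0 t, ‖f s‖ ≤ g s) :
    ‖∫ s in (0 : ℝ)..t, exp (-α * (t - s)) • f s‖ ≤
      ∫ s in (0 : ℝ)..t, exp (-α * (t - s)) * g s := by
  refine intervalIntegral.norm_integral_le_of_norm_le ht (ae_of_all _ fun s hs => ?_)
    ((by fun_prop : Continuous fun s => exp (-α * (t - s)) * g s).intervalIntegrable _ _)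
  rw [norm_smul, norm_of_nonneg (exp_pos _).le]
  exact mul_le_mul_of_nonneg_left (hfg s (Ioc_subset_Icc_self hs)) (exp_pos _).le

noncomputable def duhamel (α : ℝ) (ρ₀ : E) (h : E → E) (ρ : ℝ → E) (t : ℝ) : E :=
  exp (-α * t) • ρ₀ + ∫ s in (0 : ℝ)..t, exp (-α * (t - s)) • h (ρ s)

section duhamel

variable {α C T t : ℝ} {ρ₀ : E} {h : E → E} {ρ σ : ℝ → E}

lemma duhamel_zero : duhamel α ρ₀ h ρ 0 = ρ₀ := by
  simp [duhamel]

lemma duhamel_eq_smul : duhamel α ρ₀ h ρ =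
    fun t => exp (-α * t) • (ρ₀ + ∫ s in (0 : ℝ)..t, exp (α * s) • h (ρ s)) := by
  ext t
  rw [duhamel, smul_add, ← intervalIntegral.integral_smul]
  congr 2 with s
  rw [smul_smul, ← exp_add]
  ring_nf

lemma continuousOn_duhamel (hT : 0 ≤ T) (hh : Continuous h) (hρ : ContinuousOn ρ (Icc 0 T)) :
    ContinuousOn (duhamel α ρ₀ h ρ) (Icc 0 T) := by
  have hint : IntegrableOn (fun s => exp (α * s) • h (ρ s)) (uIcc 0 T) := by
    rw [uIcc_of_le hT]
    exact (by fun_prop : ContinuousOn (fun s => exp (α * s) • h (ρ s)) (Icc 0 T)).integrableOn_Icc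
  have hprim := intervalIntegral.continuousOn_primitive_interval hint
  rw [uIcc_of_le hT] at hprim
  rw [duhamel_eq_smul]
  fun_prop

lemma exp_neg_mul_norm_duhamel_le (hα : 0 < α) (hgrow : ∀ u, ‖h u‖ ≤ 2 * α * ‖u‖)
    (hρ : ρ ∈ deltaSet α C T ρ₀) (ht : t ∈ Icc 0 T) :
    exp (-α * t) * ‖duhamel α ρ₀ h ρ t‖ ≤ C := by
  have hρ₀ : ‖ρ₀‖ ≤ C := by
    simpa [hρ.2.1] using hρ.2.2 0 (left_mem_Icc.2 (ht.1.trans ht.2))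
  have hbound : ∀ s ∈ Icc 0 t, ‖h (ρ s)‖ ≤ 2 * α * C * exp (α * s) := fun s hs => by
    rw [mul_assoc]
    exact (hgrow _).trans (mul_le_mul_of_nonneg_left
      (norm_le_of_mem_deltaSet hρ (Icc_subset_Icc_right ht.2 hs)) (by positivity))
  have hintegral : ∫ s in (0 : ℝ)..t, exp (-α * (t - s)) * (2 * α * C * exp (α * s)) =
      C * (exp (α * t) - exp (-α * t)) := by
    simp_rw [mul_left_comm _ (2 * α * C)]
    rw [intervalIntegral.integral_const_mul, integral_exp_mul_sub_mul_exp _ _ _ (by positivity)]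
    field_simp
    ring
  rw [neg_mul, exp_neg_mul_le_iff]
  calc ‖duhamel α ρ₀ h ρ t‖
      ≤ exp (-α * t) * ‖ρ₀‖ + C * (exp (α * t) - exp (-α * t)) := by
        rw [duhamel, ← hintegral]
        refine norm_add_le_of_le ?_ (norm_integral_exp_smul_le ht.1 (by fun_prop) hbound)
        rw [norm_smul, norm_of_nonneg (exp_pos _).le]
    _ ≤ exp (-α * t) * C + C * (exp (α * t) - exp (-α * t)) := by gcongr
    _ = C * exp (α * t) := by ring

lemma mapsTo_duhamel (hT : 0 ≤ T) (hα : 0 < α) (hh : Continuous h)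
    (hgrow : ∀ u, ‖h u‖ ≤ 2 * α * ‖u‖) :
    MapsTo (duhamel α ρ₀ h) (deltaSet α C T ρ₀) (deltaSet α C T ρ₀) := fun _ hρ =>
  ⟨continuousOn_duhamel hT hh hρ.1, duhamel_zero,
    fun _ ht => exp_neg_mul_norm_duhamel_le hα hgrow hρ ht⟩

lemma intervalIntegrable_exp_smul (hh : Continuous h) (hρ : ContinuousOn ρ (Icc 0 T))
    (ht : t ∈ Icc 0 T) :
    IntervalIntegrable (fun s => exp (-α * (t - s)) • h (ρ s)) volume 0 t := by
  refine ContinuousOn.intervalIntegrable ?_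
  rw [uIcc_of_le ht.1]
  exact (by fun_prop : ContinuousOn (fun s => exp (-α * (t - s)) • h (ρ s)) (Icc 0 T)).mono
    (Icc_subset_Icc_right ht.2)

lemma duhamel_sub_duhamel (hh : Continuous h) (hρ : ContinuousOn ρ (Icc 0 T))
    (hσ : ContinuousOn σ (Icc 0 T)) (ht : t ∈ Icc 0 T) :
    duhamel α ρ₀ h ρ t - duhamel α ρ₀ h σ t =
      ∫ s in (0 : ℝ)..t, exp (-α * (t - s)) • (h (ρ s) - h (σ s)) := by
  rw [duhamel, duhamel, add_sub_add_left_eq_sub, ← intervalIntegral.integral_sub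
    (intervalIntegrable_exp_smul hh hρ ht) (intervalIntegrable_exp_smul hh hσ ht)]
  simp_rw [smul_sub]

lemma exp_neg_mul_integral_eq_contractionConst_mul (hα : 0 < α) (M : ℝ) :
    exp (-α * t) * ∫ s in (0 : ℝ)..t,
      exp (-α * (t - s)) * (2 * α * M * exp (α * s) + 2 * α * C * M * exp (2 * α * s)) =
      contractionConst α C t * M := by
  have hsplit : ∀ s, exp (-α * (t - s)) *
      (2 * α * M * exp (α * s) + 2 * α * C * M * exp (2 * α * s)) =
      2 * α * M * (exp (-α * (t - s)) * exp (α * s)) +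
        2 * α * C * M * (exp (-α * (t - s)) * exp (2 * α * s)) := fun s => by ring
  simp_rw [hsplit]
  rw [intervalIntegral.integral_add ((by fun_prop : Continuous _).intervalIntegrable _ _)
    ((by fun_prop : Continuous _).intervalIntegrable _ _), intervalIntegral.integral_const_mul,
    intervalIntegral.integral_const_mul, integral_exp_mul_sub_mul_exp _ _ _ (by positivity),
    integral_exp_mul_sub_mul_exp _ _ _ (by positivity)]
  have e1 : exp (-α * t) * exp (α * t) = 1 := by rw [← exp_add]; ring_nf; exact exp_zero
  have e2 : exp (-α * t) * exp (-α * t) = exp (-(2 * α * t)) := by rw [← exp_add]; ring_nf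
  have e3 : exp (-α * t) * exp (2 * α * t) = exp (α * t) := by rw [← exp_add]; ring_nf
  rw [contractionConst]
  generalize exp (-α * t) = y at *
  generalize exp (α * t) = x at *
  generalize exp (2 * α * t) = z at *
  generalize exp (-(2 * α * t)) = w at *
  field_simp
  linear_combination 18 * M * e1 + 12 * C * M * e3 - (18 * M + 12 * C * M) * e2

lemma weightedLipschitzOn_duhamel (hα : 0 < α) (hC : 0 ≤ C) (hh : Continuous h)
    (hlip : ∀ u v, ‖h u - h v‖ ≤ 2 * α * ‖u - v‖ + 2 * α * max ‖u‖ ‖v‖ * ‖u - v‖) :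
    WeightedLipschitzOn α T (contractionConst α C T) (deltaSet α C T ρ₀) (duhamel α ρ₀ h) := by
  intro ρ hρ σ hσ M hM t ht
  have hM0 : 0 ≤ M :=
    (by positivity : 0 ≤ exp (-α * 0) * ‖ρ 0 - σ 0‖).trans
      (hM 0 (left_mem_Icc.2 (ht.1.trans ht.2)))
  have hbound := fun s (hs : s ∈ Icc 0 t) =>
    norm_sub_le_of_mem_deltaSet hα.le hlip hρ hσ hM (Icc_subset_Icc_right ht.2 hs)
  calc exp (-α * t) * ‖duhamel α ρ₀ h ρ t - duhamel α ρ₀ h σ t‖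
      ≤ exp (-α * t) * ∫ s in (0 : ℝ)..t,
          exp (-α * (t - s)) * (2 * α * M * exp (α * s) + 2 * α * C * M * exp (2 * α * s)) := by
        rw [duhamel_sub_duhamel hh hρ.1 hσ.1 ht]
        gcongr
        exact norm_integral_exp_smul_le ht.1 (by fun_prop) hbound
    _ = contractionConst α C t * M := exp_neg_mul_integral_eq_contractionConst_mul hα M
    _ ≤ contractionConst α C T * M := by
        gcongr
        exact contractionConst_mono hα.le hC ht.2

end duhamel

section rescaling

variable {α C T κ : ℝ} {ρ₀ : E}

noncomputable def unweight (hT : 0 ≤ T) (α : ℝ) (η : C(Icc 0 T, E)) (s : ℝ) : E :=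
  exp (α * s) • IccExtend hT η s

lemma continuous_unweight (hT : 0 ≤ T) (η : C(Icc 0 T, E)) : Continuous (unweight hT α η) := by
  have := η.continuous.Icc_extend' (h := hT)
  unfold unweight
  fun_prop

lemma exp_neg_mul_smul_unweight (hT : 0 ≤ T) (η : C(Icc 0 T, E)) {s : ℝ} (hs : s ∈ Icc 0 T) :
    exp (-α * s) • unweight hT α η s = η ⟨s, hs⟩ := by
  rw [unweight, IccExtend_of_mem _ _ hs, smul_smul, ← exp_add, neg_mul, neg_add_cancel, exp_zero,
    one_smul]

lemma exp_neg_mul_norm_unweight_sub (hT : 0 ≤ T) (η η' : C(Icc 0 T, E)) {s : ℝ}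
    (hs : s ∈ Icc 0 T) :
    exp (-α * s) * ‖unweight hT α η s - unweight hT α η' s‖ = dist (η ⟨s, hs⟩) (η' ⟨s, hs⟩) := by
  rw [dist_eq_norm, ← exp_neg_mul_smul_unweight hT η hs, ← exp_neg_mul_smul_unweight hT η' hs,
    ← smul_sub, norm_smul_of_nonneg (exp_pos _).le]

lemma unweight_mem_deltaSet (hT : 0 ≤ T) {η : C(Icc 0 T, E)}
    (hη₀ : η ⟨0, left_mem_Icc.2 hT⟩ = ρ₀) (hηC : ∀ t, ‖η t‖ ≤ C) :
    unweight hT α η ∈ deltaSet α C T ρ₀ := by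
  refine ⟨(continuous_unweight hT η).continuousOn, ?_, fun t ht => ?_⟩
  · simpa [unweight, IccExtend_left] using hη₀
  · rw [← norm_smul_of_nonneg (exp_pos _).le, exp_neg_mul_smul_unweight hT η ht]
    exact hηC _

theorem WeightedLipschitzOn.exists_eqOn [CompleteSpace E] {G : (ℝ → E) → ℝ → E} (hT : 0 ≤ T)
    (hρ₀ : ‖ρ₀‖ ≤ C) (hmaps : MapsTo G (deltaSet α C T ρ₀) (deltaSet α C T ρ₀))
    (hG : WeightedLipschitzOn α T κ (deltaSet α C T ρ₀) G) (hκ0 : 0 ≤ κ) (hκ1 : κ < 1) :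
    ∃ ρ ∈ deltaSet α C T ρ₀, EqOn (G ρ) ρ (Icc 0 T) := by
  let K : Set C(Icc 0 T, E) := {η | η ⟨0, left_mem_Icc.2 hT⟩ = ρ₀ ∧ ∀ t, ‖η t‖ ≤ C}
  have hK : IsClosed K := by
    refine (isClosed_eq (continuous_eval_const _) continuous_const).inter ?_
    show IsClosed {η : C(Icc 0 T, E) | ∀ t, ‖η t‖ ≤ C}
    simp only [ofPred_forall]
    exact isClosed_iInter fun t => isClosed_le (continuous_eval_const t).norm continuous_const
  have := hK.completeSpace_coe
  have : Nonempty K := ⟨⟨ContinuousMap.const _ ρ₀, rfl, fun _ => hρ₀⟩⟩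
  have hunw (η : K) : unweight hT α η ∈ deltaSet α C T ρ₀ := unweight_mem_deltaSet hT η.2.1 η.2.2
  let Φ : K → K := fun η =>
    have hGη := hmaps (hunw η)
    have hcont : ContinuousOn (fun t => exp (-α * t) • G (unweight hT α η) t) (Icc 0 T) := by
      have := hGη.1
      fun_prop
    ⟨⟨fun t => exp (-α * t) • G (unweight hT α η) t, hcont.domRestrict⟩,
      by simpa using hGη.2.1,
      fun t => by simpa [norm_smul_of_nonneg (exp_pos _).le] using hGη.2.2 t t.2⟩
  have hΦ : ContractingWith (⟨κ, hκ0⟩ : NNReal) Φ := by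
    refine ⟨hκ1, LipschitzWith.of_dist_le_mul fun η η' => ?_⟩
    change dist _ _ ≤ κ * _
    rw [Subtype.dist_eq, ContinuousMap.dist_le (mul_nonneg hκ0 dist_nonneg)]
    intro t
    change dist (exp (-α * t) • G (unweight hT α η) t)
      (exp (-α * t) • G (unweight hT α η') t) ≤ _
    rw [dist_eq_norm, ← smul_sub, norm_smul_of_nonneg (exp_pos _).le]
    refine hG _ (hunw η) _ (hunw η') _ (fun s hs => ?_) t t.2
    exact (exp_neg_mul_norm_unweight_sub hT η.1 η'.1 hs).trans_le
      (ContinuousMap.dist_apply_le_dist _)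
  obtain ⟨η, hη⟩ : ∃ η, Φ η = η := ⟨_, hΦ.fixedPoint_isFixedPt⟩
  refine ⟨unweight hT α η, hunw η, fun t ht => ?_⟩
  have hfix : exp (-α * t) • G (unweight hT α η) t = exp (-α * t) • unweight hT α η t := by
    rw [exp_neg_mul_smul_unweight hT η.1 ht]
    exact congrArg (fun η : K => η.1 ⟨t, ht⟩) hη
  exact smul_right_injective E (exp_pos _).ne' hfix

end rescaling

end MildSolution

open MildSolution

theorem contraction_fixed_point {d : ℕ} (α C T : ℝ) (hα : 0 < α) (hC : 0 < C)
    (hT : 0 < T) (hTsmall : Real.exp (3 * α * T) < 1 + 3 / (2 * C))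
    (ρ₀ : Lp ℝ ⊤ (volume : Measure (EuclideanSpace ℝ (Fin d)))) (hρ₀ : ‖ρ₀‖ ≤ C)
    (h : Lp ℝ ⊤ (volume : Measure (EuclideanSpace ℝ (Fin d))) → Lp ℝ ⊤ (volume : Measure (EuclideanSpace ℝ (Fin d))))
    (hlip : ∀ u v, ‖h u - h v‖ ≤ 2 * α * ‖u - v‖ + 2 * α * max ‖u‖ ‖v‖ * ‖u - v‖)
    (hgrow : ∀ u, ‖h u‖ ≤ 2 * α * ‖u‖)
    (F : (ℝ → Lp ℝ ⊤ (volume : Measure (EuclideanSpace ℝ (Fin d)))) → (ℝ → Lp ℝ ⊤ (volume : Measure (EuclideanSpace ℝ (Fin d)))))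
    (hF : ∀ ρ t, F ρ t = Real.exp (-α * t) • ρ₀ +
      ∫ s in (0 : ℝ)..t, Real.exp (-α * (t - s)) • h (ρ s)) :
    -- Δ_C maps into itself, F is a strict contraction on Δ_C, and has a unique fixed point
    (∀ ρ,
        (ContinuousOn ρ (Icc 0 T) ∧ ρ 0 = ρ₀ ∧
          ∀ t ∈ Icc (0 : ℝ) T, Real.exp (-α * t) * ‖ρ t‖ ≤ C) →
        (ContinuousOn (F ρ) (Icc 0 T) ∧ F ρ 0 = ρ₀ ∧
          ∀ t ∈ Icc (0 : ℝ) T, Real.exp (-α * t) * ‖F ρ t‖ ≤ C)) ∧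
    (∃ κ : ℝ, 0 ≤ κ ∧ κ < 1 ∧
      ∀ ρ σ,
        (ContinuousOn ρ (Icc 0 T) ∧ ρ 0 = ρ₀ ∧
          ∀ t ∈ Icc (0 : ℝ) T, Real.exp (-α * t) * ‖ρ t‖ ≤ C) →
        (ContinuousOn σ (Icc 0 T) ∧ σ 0 = ρ₀ ∧
          ∀ t ∈ Icc (0 : ℝ) T, Real.exp (-α * t) * ‖σ t‖ ≤ C) →
        ∀ t ∈ Icc (0 : ℝ) T,
          Real.exp (-α * t) * ‖F ρ t - F σ t‖ ≤
            κ * sSup ((fun s => Real.exp (-α * s) * ‖ρ s - σ s‖) '' Icc (0 : ℝ) T)) ∧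
    (∃ ρ,
        (ContinuousOn ρ (Icc 0 T) ∧ ρ 0 = ρ₀ ∧
          ∀ t ∈ Icc (0 : ℝ) T, Real.exp (-α * t) * ‖ρ t‖ ≤ C) ∧
        (∀ t ∈ Icc (0 : ℝ) T, F ρ t = ρ t) ∧
        ∀ σ,
          (ContinuousOn σ (Icc 0 T) ∧ σ 0 = ρ₀ ∧
            ∀ t ∈ Icc (0 : ℝ) T, Real.exp (-α * t) * ‖σ t‖ ≤ C) →
          (∀ t ∈ Icc (0 : ℝ) T, F σ t = σ t) →
          ∀ t ∈ Icc (0 : ℝ) T, σ t = ρ t) := by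
  obtain rfl : F = duhamel α ρ₀ h := funext fun ρ => funext (hF ρ)
  have hh : Continuous h := continuous_of_norm_sub_le hlip
  have hmaps : MapsTo (duhamel α ρ₀ h) (deltaSet α C T ρ₀) (deltaSet α C T ρ₀) :=
    mapsTo_duhamel hT.le hα hh hgrow
  have hG := weightedLipschitzOn_duhamel (T := T) (ρ₀ := ρ₀) hα hC.le hh hlip
  have hκ0 := contractionConst_nonneg hα.le hC.le hT.le
  have hκ1 := contractionConst_lt_one (α := α) hC hTsmall
  refine ⟨fun ρ hρ => hmaps hρ, ⟨_, hκ0, hκ1, fun ρ σ hρ hσ => ?_⟩, ?_⟩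
  · exact hG ρ hρ σ hσ _ fun s hs => le_weightedSup (hρ.1.sub hσ.1) hs
  · obtain ⟨ρ, hρ, hρfix⟩ := hG.exists_eqOn hT.le hρ₀ hmaps hκ0 hκ1
    exact ⟨ρ, hρ, fun t ht => hρfix ht,
      fun σ hσ hσfix => hG.eqOn hκ1 hσ hρ (fun t ht => hσfix t ht) hρfix⟩
end
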